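/- Let Ξ : [0,1] × ℝ × ℝ → ℝ be continuous, bounded, and L-periodic in its second variable (Ξ(x, y + L, z) = Ξ(x, y, z)). Then ε^{−1} ∫_{R^ε} Ξ(x₁, x₁/ε, x₂/ε) dx₁ dx₂ → (1/L) ∫₀¹ ∫₀^L ∫_{−b(x)}^{G(x,y)} Ξ(x, y, z) dz dy dx as ε → 0⁺. -/

import Mathlib

/-!
Integrating out the transverse variable `x₂ = ε z` turns `ε⁻¹ ∫_{R^ε} Ξ` into the
one-dimensional oscillatory integral `∫₀¹ H(x, x/ε) dx`, where
`H(x, y) = ∫_{-b(x)}^{G(x,y)} Ξ(x, y, z) dz` is continuous, bounded and `L`-periodic in `y`.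
Averaging `∫₀¹ H(x, (x + s)/ε) dx` over the shifts `0 < s < εL` gives exactly the cell average
`L⁻¹ ∫₀¹ ∫₀^L H`, by periodicity, while each shift moves the integral by at most
`ω(s) + 2 s sup|H|`, where `ω` is a modulus of continuity of `H` in `x`, uniform in `y` because `H`
is periodic. The data only matter on `[0,1]`, so composing them with the projection onto `[0,1]`
makes them continuous everywhere without changing either side.
-/

open MeasureTheory Set Filter Function Topology

def thinDomain (b : ℝ → ℝ) (G : ℝ × ℝ → ℝ) (ε : ℝ) : Set (ℝ × ℝ) :=
  {p : ℝ × ℝ | p.1 ∈ Ioo 0 1 ∧ p.2 ∈ Ioo (-(ε * b p.1)) (ε * G (p.1, p.1 / ε))}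

theorem intervalIntegral_eq_setIntegral_Ioo {E : Type*} [NormedAddCommGroup E] [NormedSpace ℝ E]
    {f : ℝ → E} {a b : ℝ} (hab : a ≤ b) : ∫ x in a..b, f x = ∫ x in Ioo a b, f x := by
  rw [intervalIntegral.integral_of_le hab, integral_Ioc_eq_integral_Ioo]

theorem continuous_intervalIntegral_of_continuous {X E : Type*} [TopologicalSpace X]
    [NormedAddCommGroup E] [NormedSpace ℝ E] {f : X → ℝ → E} (hf : Continuous (uncurry f))
    {u v : X → ℝ} (hu : Continuous u) (hv : Continuous v) :
    Continuous fun x => ∫ t in u x..v x, f x t := by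
  have hprim {w : X → ℝ} (hw : Continuous w) : Continuous fun x => ∫ t in (0 : ℝ)..w x, f x t :=
    intervalIntegral.continuous_parametric_intervalIntegral_of_continuous (μ := volume) hf hw
  refine ((hprim hv).sub (hprim hu)).congr fun x => ?_
  exact intervalIntegral.integral_interval_sub_left ((hf.uncurry_left x).intervalIntegrable _ _)
    ((hf.uncurry_left x).intervalIntegrable _ _)

theorem setIntegral_regionBetween {α E : Type*} [MeasurableSpace α] [NormedAddCommGroup E]
    [NormedSpace ℝ E] {μ : Measure α} [SFinite μ] {f g : α → ℝ} {s : Set α} (hf : Measurable f)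
    (hg : Measurable g) (hs : MeasurableSet s) {F : α × ℝ → E}
    (hF : IntegrableOn F (regionBetween f g s) (μ.prod volume)) :
    ∫ p in regionBetween f g s, F p ∂μ.prod volume =
      ∫ x in s, (∫ y in Ioo (f x) (g x), F (x, y)) ∂μ := by
  have hR := measurableSet_regionBetween hf hg hs
  rw [← integral_indicator hR, integral_prod _ ((integrable_indicator_iff hR).2 hF),
    ← integral_indicator hs]
  congr 1 with x
  by_cases hx : x ∈ s
  · rw [indicator_of_mem hx, ← integral_indicator measurableSet_Ioo]
    congr 1 with y
    simp only [indicator, regionBetween, mem_ofPred_eq, hx, true_and]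
  · simp [indicator, regionBetween, hx]

theorem Function.Periodic.intervalIntegral_comp_add_div {E : Type*} [NormedAddCommGroup E]
    [NormedSpace ℝ E] {g : ℝ → E} {L : ℝ} (hg : Periodic g L) {ε : ℝ} (hε : ε ≠ 0) (x : ℝ) :
    ∫ s in (0 : ℝ)..ε * L, g ((x + s) / ε) = ε • ∫ y in (0 : ℝ)..L, g y := by
  rw [intervalIntegral.integral_comp_add_left (fun u => g (u / ε)),
    intervalIntegral.integral_comp_div g hε, add_zero,
    show (x + ε * L) / ε = x / ε + L by field_simp, hg.intervalIntegral_add_eq (x / ε) 0, zero_add]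

theorem exists_pos_forall_abs_sub_le_of_periodic {H : ℝ → ℝ → ℝ} {L : ℝ}
    (hH : Continuous (uncurry H)) (hper : ∀ x, Periodic (H x) L) (hL : 0 < L)
    {K : Set ℝ} (hK : IsCompact K) {δ : ℝ} (hδ : 0 < δ) :
    ∃ η > 0, ∀ u ∈ K, ∀ v ∈ K, |u - v| ≤ η → ∀ t, |H u t - H v t| ≤ δ := by
  obtain ⟨η, hη, hmod⟩ := Metric.uniformContinuousOn_iff_le.1
    ((hK.prod isCompact_Icc).uniformContinuousOn_of_continuous hH.continuousOn) δ hδ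
  refine ⟨η, hη, fun u hu v hv huv t => ?_⟩
  have ht : t - ⌊t / L⌋ * L ∈ Icc 0 L :=
    ⟨Int.sub_floor_div_mul_nonneg t hL, (Int.sub_floor_div_mul_lt t hL).le⟩
  have := hmod (u, _) ⟨hu, ht⟩ (v, _) ⟨hv, ht⟩ (by simp [Prod.dist_eq, Real.dist_eq, huv])
  simpa [Real.dist_eq, (hper u).sub_int_mul_eq, (hper v).sub_int_mul_eq] using this

theorem abs_intervalIntegral_shift_sub_le {f : ℝ → ℝ → ℝ} (hf : Continuous (uncurry f))
    {a b s δ M : ℝ} (hs : 0 ≤ s) (hsab : s ≤ b - a) (hM : ∀ x u, |f x u| ≤ M)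
    (hδ : ∀ u ∈ Icc a b, ∀ v ∈ Icc a b, |u - v| ≤ s → ∀ t, |f u t - f v t| ≤ δ) :
    |(∫ x in a..b, f x (x + s)) - ∫ x in a..b, f x x| ≤ δ * (b - a - s) + 2 * M * s := by
  have hshift : ∫ x in a..b, f x (x + s) = ∫ u in a + s..b + s, f (u - s) u := by
    simpa using intervalIntegral.integral_comp_add_right (fun u => f (u - s) u) s
  have hsplit : (∫ u in a + s..b + s, f (u - s) u) - ∫ u in a..b, f u u =
      (∫ u in a + s..b, (f (u - s) u - f u u)) + (∫ u in b..b + s, f (u - s) u)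
        - ∫ u in a..a + s, f u u := by
    have hint {g : ℝ → ℝ} (hg : Continuous g) (c d : ℝ) : IntervalIntegrable g volume c d :=
      hg.intervalIntegrable c d
    rw [intervalIntegral.integral_sub (hint (by fun_prop) _ _) (hint (by fun_prop) _ _),
      ← intervalIntegral.integral_add_adjacent_intervals (b := b) (hint (by fun_prop) _ _)
        (hint (by fun_prop) _ _),
      ← intervalIntegral.integral_add_adjacent_intervals (b := a + s) (c := b)
        (hint (g := fun u => f u u) (by fun_prop) _ _) (hint (by fun_prop) _ _)]
    ring
  have hmid : |∫ u in a + s..b, (f (u - s) u - f u u)| ≤ δ * (b - a - s) := by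
    have := intervalIntegral.norm_integral_le_of_norm_le_const (a := a + s) (b := b)
      (C := δ) (f := fun u => f (u - s) u - f u u) fun u hu => by
        rw [uIoc_of_le (by linarith)] at hu
        exact hδ _ ⟨by linarith [hu.1], by linarith [hu.2]⟩ _ ⟨by linarith [hu.1], hu.2⟩
          (by rw [sub_sub_cancel_left, abs_neg, abs_of_nonneg hs]) _
    rwa [abs_of_nonneg (by linarith), sub_add_eq_sub_sub] at this
  have hend : ∀ (g : ℝ → ℝ) (c : ℝ), (∀ u, |g u| ≤ M) → |∫ u in c..c + s, g u| ≤ M * s :=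
    fun g c hg => by
      simpa [abs_of_nonneg hs] using
        intervalIntegral.norm_integral_le_of_norm_le_const (a := c) (b := c + s) fun u _ =>
          (Real.norm_eq_abs _).trans_le (hg u)
  rw [hshift, hsplit]
  have h₁ := hend (fun u => f (u - s) u) b fun u => hM _ _
  have h₂ := hend (fun u => f u u) a fun u => hM _ _
  linarith [abs_sub ((∫ u in a + s..b, (f (u - s) u - f u u)) + ∫ u in b..b + s, f (u - s) u)
    (∫ u in a..a + s, f u u), abs_add_le (∫ u in a + s..b, (f (u - s) u - f u u))
    (∫ u in b..b + s, f (u - s) u)]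

theorem exists_pos_forall_abs_intervalIntegral_comp_add_div_sub_le {H : ℝ → ℝ → ℝ}
    {L M a b : ℝ} (hH : Continuous (uncurry H)) (hper : ∀ x, Periodic (H x) L) (hL : 0 < L)
    (hM : ∀ x t, |H x t| ≤ M) (hab : a < b) {δ : ℝ} (hδ : 0 < δ) :
    ∃ η > 0, ∀ ε s, s ∈ Icc 0 η →
      |(∫ x in a..b, H x ((x + s) / ε)) - ∫ x in a..b, H x (x / ε)| ≤ δ := by
  have hM₀ : 0 ≤ M := (abs_nonneg _).trans (hM 0 0)
  obtain ⟨η, hη, hmod⟩ := exists_pos_forall_abs_sub_le_of_periodic hH hper hL isCompact_Icc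
    (div_pos hδ (mul_pos two_pos (sub_pos.2 hab)))
  refine ⟨min η (min (b - a) (δ / (4 * (M + 1)))), by positivity, fun ε s hs => ?_⟩
  obtain ⟨hsη, hsab, hsδ⟩ : s ≤ η ∧ s ≤ b - a ∧ s ≤ δ / (4 * (M + 1)) := by
    simpa only [le_min_iff] using hs.2
  have := abs_intervalIntegral_shift_sub_le (f := fun x u => H x (u / ε)) (by fun_prop) hs.1 hsab
    (fun x u => hM x _) fun u hu v hv huv t => hmod u hu v hv (huv.trans hsη) (t / ε)
  refine this.trans ?_
  have h₁ : δ / (2 * (b - a)) * (b - a - s) ≤ δ / 2 := by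
    rw [div_mul_eq_mul_div, div_le_div_iff₀ (by linarith) two_pos]
    nlinarith [hs.1]
  have h₂ : 2 * M * s ≤ δ / 2 := by
    rw [le_div_iff₀ (by positivity)] at hsδ
    nlinarith
  linarith

theorem abs_inv_mul_intervalIntegral_sub_le {F : ℝ → ℝ} {h c K : ℝ} (hh : 0 < h)
    (hF : IntervalIntegrable F volume 0 h) (hK : ∀ s ∈ Ioc 0 h, |F s - c| ≤ K) :
    |h⁻¹ * (∫ s in (0 : ℝ)..h, F s) - c| ≤ K := by
  have hsub : h⁻¹ * (∫ s in (0 : ℝ)..h, F s) - c = h⁻¹ * ∫ s in (0 : ℝ)..h, (F s - c) := by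
    rw [intervalIntegral.integral_sub hF intervalIntegrable_const, intervalIntegral.integral_const,
      smul_eq_mul, sub_zero, mul_sub, inv_mul_cancel_left₀ hh.ne']
  have hbound := intervalIntegral.norm_integral_le_of_norm_le_const (a := 0) (b := h) (C := K)
    (f := fun s => F s - c) fun s hs => by
      rw [uIoc_of_le hh.le] at hs
      exact hK s hs
  rw [hsub, abs_mul, abs_inv, abs_of_pos hh, inv_mul_le_iff₀ hh]
  simpa [abs_of_pos hh, mul_comm] using hbound

theorem tendsto_intervalIntegral_comp_div_of_periodic {H : ℝ → ℝ → ℝ} {L M a b : ℝ}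
    (hH : Continuous (uncurry H)) (hper : ∀ x, Periodic (H x) L) (hL : 0 < L)
    (hM : ∀ x t, |H x t| ≤ M) (hab : a < b) :
    Tendsto (fun ε => ∫ x in a..b, H x (x / ε)) (𝓝[>] 0)
      (𝓝 (L⁻¹ * ∫ x in a..b, ∫ y in (0 : ℝ)..L, H x y)) := by
  have hmean : ∀ ε > 0, L⁻¹ * (∫ x in a..b, ∫ y in (0 : ℝ)..L, H x y) =
      (ε * L)⁻¹ * ∫ s in (0 : ℝ)..ε * L, ∫ x in a..b, H x ((x + s) / ε) := by
    intro ε hε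
    have hcont : Continuous (uncurry fun x s => H x ((x + s) / ε)) := by fun_prop
    have hint : IntegrableOn (uncurry fun x s => H x ((x + s) / ε))
        (uIoc a b ×ˢ uIoc 0 (ε * L)) :=
      (hcont.continuousOn.integrableOn_compact (isCompact_uIcc.prod isCompact_uIcc)).mono_set
        (prod_mono uIoc_subset_uIcc uIoc_subset_uIcc)
    rw [← intervalIntegral_intervalIntegral_swap hint]
    simp_rw [(hper _).intervalIntegral_comp_add_div hε.ne', smul_eq_mul,
      intervalIntegral.integral_const_mul]
    field_simp
  rw [Metric.tendsto_nhds]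
  intro δ hδ
  obtain ⟨η, hη, hshift⟩ :=
    exists_pos_forall_abs_intervalIntegral_comp_add_div_sub_le hH hper hL hM hab (half_pos hδ)
  filter_upwards [Ioo_mem_nhdsGT (div_pos hη hL)] with ε ⟨hε, hεη⟩
  rw [Real.dist_eq, hmean ε hε, abs_sub_comm]
  refine (abs_inv_mul_intervalIntegral_sub_le (mul_pos hε hL)
    (Continuous.intervalIntegrable (by fun_prop) _ _) fun s hs =>
      hshift ε s ⟨hs.1.le, hs.2.trans ((lt_div_iff₀ hL).1 hεη).le⟩).trans_lt (half_lt_self hδ)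

theorem thinDomain_eq_regionBetween (b : ℝ → ℝ) (G : ℝ × ℝ → ℝ) (ε : ℝ) :
    thinDomain b G ε =
      regionBetween (fun x => -(ε * b x)) (fun x => ε * G (x, x / ε)) (Ioo 0 1) :=
  rfl

theorem measurableSet_thinDomain {b : ℝ → ℝ} {G : ℝ × ℝ → ℝ} (hb : Measurable b)
    (hG : Measurable G) {ε : ℝ} : MeasurableSet (thinDomain b G ε) := by
  rw [thinDomain_eq_regionBetween]
  exact measurableSet_regionBetween (by fun_prop) (by fun_prop) measurableSet_Ioo

theorem thinDomain_congr {b b' : ℝ → ℝ} {G G' : ℝ × ℝ → ℝ} {ε : ℝ}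
    (hb : ∀ x ∈ Ioo (0 : ℝ) 1, b' x = b x)
    (hG : ∀ x ∈ Ioo (0 : ℝ) 1, ∀ y, G' (x, y) = G (x, y)) :
    thinDomain b' G' ε = thinDomain b G ε := by
  ext ⟨x, y⟩
  refine ⟨fun ⟨hx, hy⟩ => ⟨hx, ?_⟩, fun ⟨hx, hy⟩ => ⟨hx, ?_⟩⟩ <;>
    simpa [hb x hx, hG x hx] using hy

theorem integral_thinDomain {b : ℝ → ℝ} {G : ℝ × ℝ → ℝ} {Ξ : ℝ × ℝ × ℝ → ℝ} {C ε : ℝ}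
    (hb : Continuous b) (hG : Continuous G) (hΞ : Continuous Ξ) (hC : ∀ q, |Ξ q| ≤ C)
    (hle : ∀ x t, -b x ≤ G (x, t)) (hε : 0 < ε) :
    ∫ p in thinDomain b G ε, Ξ (p.1, p.1 / ε, p.2 / ε) =
      ε * ∫ x in (0 : ℝ)..1, ∫ z in -b x..G (x, x / ε), Ξ (x, x / ε, z) := by
  have hfin : (volume.prod volume) (thinDomain b G ε) ≠ ⊤ := by
    rw [thinDomain_eq_regionBetween, volume_regionBetween_eq_integral
      ((Continuous.integrableOn_Icc (by fun_prop)).mono_set Ioo_subset_Icc_self)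
      ((Continuous.integrableOn_Icc (by fun_prop)).mono_set Ioo_subset_Icc_self)
      measurableSet_Ioo fun x _ => by nlinarith [hle x (x / ε)]]
    exact ENNReal.ofReal_ne_top
  have hint : IntegrableOn (fun p : ℝ × ℝ => Ξ (p.1, p.1 / ε, p.2 / ε)) (thinDomain b G ε)
      (volume.prod volume) :=
    Measure.integrableOn_of_bounded hfin (Continuous.aestronglyMeasurable (by fun_prop))
      (ae_of_all _ fun p => (Real.norm_eq_abs _).trans_le (hC _))
  rw [thinDomain_eq_regionBetween] at hint ⊢
  rw [Measure.volume_eq_prod,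
    setIntegral_regionBetween (by fun_prop) (by fun_prop) measurableSet_Ioo hint,
    intervalIntegral_eq_setIntegral_Ioo zero_le_one, ← integral_const_mul]
  refine setIntegral_congr_fun measurableSet_Ioo fun x _ => ?_
  rw [← intervalIntegral_eq_setIntegral_Ioo (by nlinarith [hle x (x / ε)]),
    intervalIntegral.integral_comp_div (fun z => Ξ (x, x / ε, z)) hε.ne', neg_div,
    mul_div_cancel_left₀ _ hε.ne', mul_div_cancel_left₀ _ hε.ne', smul_eq_mul]

theorem tendsto_inv_mul_integral_thinDomain {L K C : ℝ} {b : ℝ → ℝ} {G : ℝ × ℝ → ℝ}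
    {Ξ : ℝ × ℝ × ℝ → ℝ} (hL : 0 < L) (hb : Continuous b) (hG : Continuous G)
    (hΞ : Continuous Ξ) (hle : ∀ x t, -b x ≤ G (x, t)) (hK : ∀ x t, G (x, t) + b x ≤ K)
    (hC : ∀ q, |Ξ q| ≤ C)
    (hGper : ∀ x y, G (x, y + L) = G (x, y)) (hΞper : ∀ x y z, Ξ (x, y + L, z) = Ξ (x, y, z)) :
    Tendsto (fun ε => ε⁻¹ * ∫ p in thinDomain b G ε, Ξ (p.1, p.1 / ε, p.2 / ε)) (𝓝[>] 0)
      (𝓝 ((1 / L) * ∫ x in Ioo (0 : ℝ) 1, ∫ y in Ioo (0 : ℝ) L,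
        ∫ z in Ioo (-(b x)) (G (x, y)), Ξ (x, y, z))) := by
  set H : ℝ → ℝ → ℝ := fun x t => ∫ z in -b x..G (x, t), Ξ (x, t, z) with hH
  have hHc : Continuous (uncurry H) :=
    continuous_intervalIntegral_of_continuous (by fun_prop) (by fun_prop) (by fun_prop)
  have hHper : ∀ x, Periodic (H x) L := fun x t => by simp only [hH, hGper, hΞper]
  have hHbd : ∀ x t, |H x t| ≤ C * K := fun x t => by
    have := intervalIntegral.norm_integral_le_of_norm_le_const (a := -b x) (b := G (x, t))
      fun z _ => (Real.norm_eq_abs _).trans_le (hC (x, t, z))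
    rw [Real.norm_eq_abs, sub_neg_eq_add,
      abs_of_nonneg (a := G (x, t) + b x) (by linarith [hle x t])] at this
    exact this.trans (mul_le_mul_of_nonneg_left (hK x t) ((abs_nonneg _).trans (hC 0)))
  have hlim : (1 / L) * ∫ x in Ioo (0 : ℝ) 1, ∫ y in Ioo (0 : ℝ) L,
      ∫ z in Ioo (-(b x)) (G (x, y)), Ξ (x, y, z) =
        L⁻¹ * ∫ x in (0 : ℝ)..1, ∫ y in (0 : ℝ)..L, H x y := by
    simp only [hH, intervalIntegral_eq_setIntegral_Ioo zero_le_one,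
      intervalIntegral_eq_setIntegral_Ioo hL.le, intervalIntegral_eq_setIntegral_Ioo (hle _ _),
      one_div]
  rw [hlim]
  refine (tendsto_intervalIntegral_comp_div_of_periodic hHc hHper hL hHbd zero_lt_one).congr' ?_
  filter_upwards [self_mem_nhdsWithin] with ε hε
  rw [integral_thinDomain hb hG hΞ hC hle hε, inv_mul_cancel_left₀ (ne_of_gt hε)]

theorem stmt_12_general (L b₁ G₀ G₁ : ℝ) (hL : 0 < L) (hG₀ : 0 < G₀)
    (b : ℝ → ℝ) (hbc : ContinuousOn b (Icc 0 1))
    (hbb : ∀ x ∈ Icc (0 : ℝ) 1, 0 ≤ b x ∧ b x ≤ b₁)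
    (G : ℝ × ℝ → ℝ) (hGc : ContinuousOn G (Icc 0 1 ×ˢ (univ : Set ℝ)))
    (hGper : ∀ x y : ℝ, G (x, y + L) = G (x, y))
    (hGb : ∀ x ∈ Icc (0 : ℝ) 1, ∀ y : ℝ, G₀ ≤ G (x, y) ∧ G (x, y) ≤ G₁)
    (Ξ : ℝ × ℝ × ℝ → ℝ)
    (hΞc : ContinuousOn Ξ (Icc 0 1 ×ˢ (univ : Set (ℝ × ℝ))))
    (hΞbd : ∃ C : ℝ, ∀ q : ℝ × ℝ × ℝ, |Ξ q| ≤ C)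
    (hΞper : ∀ x y z : ℝ, Ξ (x, y + L, z) = Ξ (x, y, z)) :
    Tendsto (fun ε : ℝ => ε⁻¹ * ∫ p in thinDomain b G ε, Ξ (p.1, p.1 / ε, p.2 / ε))
      (nhdsWithin 0 (Ioi 0))
      (nhds ((1 / L) * ∫ x in Ioo (0 : ℝ) 1, ∫ y in Ioo (0 : ℝ) L,
        ∫ z in Ioo (-(b x)) (G (x, y)), Ξ (x, y, z))) := by
  obtain ⟨C, hC⟩ := hΞbd
  set c : ℝ → ℝ := fun x => projIcc 0 1 zero_le_one x
  have hc : Continuous c := continuous_subtype_val.comp continuous_projIcc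
  have hcI : ∀ x, c x ∈ Icc (0 : ℝ) 1 := fun x => (projIcc 0 1 zero_le_one x).2
  have hc_eq : ∀ x ∈ Ioo (0 : ℝ) 1, c x = x := fun x hx =>
    congrArg Subtype.val (projIcc_of_mem _ (Ioo_subset_Icc_self hx))
  have hbc' : Continuous (b ∘ c) := hbc.comp_continuous hc hcI
  have hGc' : Continuous fun p : ℝ × ℝ => G (c p.1, p.2) :=
    hGc.comp_continuous (by fun_prop) fun p => ⟨hcI _, mem_univ _⟩
  have hΞc' : Continuous fun q : ℝ × ℝ × ℝ => Ξ (c q.1, q.2) :=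
    hΞc.comp_continuous (by fun_prop) fun q => ⟨hcI _, mem_univ _⟩
  have key := tendsto_inv_mul_integral_thinDomain (K := G₁ + b₁) hL hbc' hGc' hΞc'
    (fun x t => by dsimp only [comp]; linarith [(hbb _ (hcI x)).1, (hGb _ (hcI x) t).1, hG₀])
    (fun x t => by dsimp only [comp]; linarith [(hbb _ (hcI x)).2, (hGb _ (hcI x) t).2])
    (fun q => hC _) (fun x y => hGper _ _) (fun x y z => hΞper _ _ _)
  have hdom : ∀ ε, thinDomain (b ∘ c) (fun p => G (c p.1, p.2)) ε = thinDomain b G ε :=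
    fun ε => thinDomain_congr (fun x hx => by simp only [comp, hc_eq x hx])
      fun x hx y => by simp only [hc_eq x hx]
  convert key using 3 with ε
  · rw [hdom]
    refine setIntegral_congr_fun ?_ fun p hp => by simp only [hc_eq p.1 hp.1]
    exact hdom ε ▸ measurableSet_thinDomain hbc'.measurable hGc'.measurable
  · refine setIntegral_congr_fun measurableSet_Ioo fun x hx => by simp only [comp, hc_eq x hx]

/-- Thin-domain two-scale averaging: for `Ξ : [0,1] × ℝ × ℝ → ℝ` continuous,
bounded and `L`-periodic in its second variable,
`ε⁻¹ ∫_{R^ε} Ξ(x₁, x₁/ε, x₂/ε) dx₁dx₂ → (1/L) ∫₀¹ ∫₀^L ∫_{-b(x)}^{G(x,y)} Ξ(x,y,z) dz dy dx`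
as `ε → 0⁺`. -/
theorem stmt_12 (L b₁ G₀ G₁ : ℝ) (hL : 0 < L) (hG₀ : 0 < G₀)
    (b : ℝ → ℝ) (hbc : ContinuousOn b (Icc 0 1)) (hbC1 : ContDiffOn ℝ 1 b (Ioo 0 1))
    (hbb : ∀ x ∈ Icc (0 : ℝ) 1, 0 ≤ b x ∧ b x ≤ b₁)
    (G : ℝ × ℝ → ℝ) (hGc : ContinuousOn G (Icc 0 1 ×ˢ (univ : Set ℝ)))
    (hGC1 : ContDiffOn ℝ 1 G (Ioo 0 1 ×ˢ (univ : Set ℝ)))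
    (hGper : ∀ x y : ℝ, G (x, y + L) = G (x, y))
    (hGb : ∀ x ∈ Icc (0 : ℝ) 1, ∀ y : ℝ, G₀ ≤ G (x, y) ∧ G (x, y) ≤ G₁)
    (Ξ : ℝ × ℝ × ℝ → ℝ)
    (hΞc : ContinuousOn Ξ (Icc 0 1 ×ˢ (univ : Set (ℝ × ℝ))))
    (hΞbd : ∃ C : ℝ, ∀ q : ℝ × ℝ × ℝ, |Ξ q| ≤ C)
    (hΞper : ∀ x y z : ℝ, Ξ (x, y + L, z) = Ξ (x, y, z)) :
    Tendsto (fun ε : ℝ => ε⁻¹ * ∫ p in thinDomain b G ε, Ξ (p.1, p.1 / ε, p.2 / ε))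
      (nhdsWithin 0 (Ioi 0))
      (nhds ((1 / L) * ∫ x in Ioo (0 : ℝ) 1, ∫ y in Ioo (0 : ℝ) L,
        ∫ z in Ioo (-(b x)) (G (x, y)), Ξ (x, y, z))) :=
  stmt_12_general L b₁ G₀ G₁ hL hG₀ b hbc hbb G hGc hGper hGb Ξ hΞc hΞbd hΞper
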